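/- (Singular-value hard-ridge thresholding solves the rank-Frobenius penalized problem) Let Y ∈ ℝ^{n×m} with singular value decomposition Y = U diag(σ_i(Y)) Vᵀ, and let λ > 0, η ≥ 0, with no singular value of Y equal to λ. Then B̂ = U diag(Θ_HR(σ_i(Y);λ,η)) Vᵀ is the unique global minimizer over B ∈ ℝ^{n×m} of ‖Y−B‖_F²/2 + (η/2)‖B‖_F² + (λ²/(2(1+η)))·rank(B). -/

import Mathlib

open Matrix

/-- Squared Frobenius norm of a real matrix. -/
def frobSq {n m : ℕ} (A : Matrix (Fin n) (Fin m) ℝ) : ℝ := ∑ i, ∑ j, A i j ^ 2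

/-- `(U, σ, V)` is a (reduced) singular value decomposition of the real `n × m` matrix `B`. -/
def IsSVD {n m k : ℕ} (B : Matrix (Fin n) (Fin m) ℝ) (U : Matrix (Fin n) (Fin k) ℝ)
    (σ : Fin k → ℝ) (V : Matrix (Fin m) (Fin k) ℝ) : Prop :=
  Uᵀ * U = 1 ∧ Vᵀ * V = 1 ∧ Antitone σ ∧ (∀ i, 0 ≤ σ i) ∧ B = U * diagonal σ * Vᵀ

/-- The hard-ridge thresholding rule `Θ_HR(t;λ,η)`. -/
noncomputable def thetaHR (lam η t : ℝ) : ℝ := if |t| < lam then 0 else t / (1 + η)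

/-!
Let `P` be the orthogonal projection onto the column space of `B`, so that `P B = B` and
`rank B = tr P`. With `Y = U diag(σ) Vᵀ`, `qᵢ = (Uᵀ P U)ᵢᵢ ∈ [0, 1]` and `tr P ≥ ∑ qᵢ`,
completing the square in the range of `P` gives
`J(B) = ‖Y‖²/2 + (1+η)/2 ‖B - P Y/(1+η)‖² + λ²/(2(1+η)) (tr P - ∑ qᵢ) + ∑ (λ² - σᵢ²) qᵢ/(2(1+η))`.
Since `σᵢ ≠ λ`, the last sum is minimal over `qᵢ ∈ [0, 1]` exactly at `qᵢ = [λ < σᵢ]`, where it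
equals `J(B̂) - ‖Y‖²/2`. Equality therefore forces `B = P Y/(1+η)` and `P U = U diag([λ < σᵢ])`,
i.e. `B = B̂`.
-/

namespace Matrix

theorem trace_eq_rank_of_isIdempotentElem {ι K : Type*} [Fintype ι] [DecidableEq ι] [Field K]
    {P : Matrix ι ι K} (hP : IsIdempotentElem P) : P.trace = P.rank := by
  rw [← trace_toLin'_eq, (LinearMap.IsIdempotentElem.isProj_range (toLin' P)
    (hP.map toLinAlgEquiv')).trace]
  rfl

theorem exists_isStarProjection_mul_eq_self {ι κ : Type*} [Fintype ι] [Fintype κ]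
    [DecidableEq ι] [DecidableEq κ] (B : Matrix ι κ ℝ) :
    ∃ P : Matrix ι ι ℝ, IsStarProjection P ∧ P * B = B ∧ P.rank = B.rank := by
  set S := LinearMap.range (toEuclideanLin B)
  set e := toEuclideanCLM (n := ι) (𝕜 := ℝ)
  have hP : e (e.symm S.starProjection) = S.starProjection := e.apply_symm_apply _
  set P := e.symm S.starProjection
  have hS := isStarProjection_starProjection (U := S)
  refine ⟨P, ?_, ?_, ?_⟩
  · rw [isStarProjection_iff'] at hS ⊢
    constructor <;> apply EquivLike.injective e
    · rw [map_mul, hP, hS.1]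
    · rw [map_star, hP, hS.2]
  · rw [ext_iff_mulVec]
    intro v
    rw [← mulVec_mulVec]
    have := ofLp_toEuclideanCLM P (WithLp.toLp 2 (B *ᵥ v))
    rw [hP, S.starProjection_eq_self_iff.mpr ⟨WithLp.toLp 2 v, by simp⟩] at this
    simpa using this.symm
  · rw [rank_eq_finrank_range_toLin _ (PiLp.basisFun 2 ℝ ι) (PiLp.basisFun 2 ℝ ι),
      rank_eq_finrank_range_toLin _ (PiLp.basisFun 2 ℝ ι) (PiLp.basisFun 2 ℝ κ),
      ← toLpLin_eq_toLin, ← toLpLin_eq_toLin]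
    have : toLpLin 2 2 P = (S.starProjection : _ →ₗ[ℝ] _) := by rw [← hP]; rfl
    rw [this, Submodule.range_starProjection]

theorem transpose_eq_self_of_isStarProjection {ι : Type*} [Fintype ι] {P : Matrix ι ι ℝ}
    (hP : IsStarProjection P) : Pᵀ = P := by
  have := hP.isSelfAdjoint
  rwa [IsSelfAdjoint, star_eq_conjTranspose, conjTranspose_eq_transpose_of_trivial] at this

theorem isStarProjection_mul_transpose {ι κ : Type*} [Fintype ι] [Fintype κ] [DecidableEq κ]
    {U : Matrix ι κ ℝ} (hU : Uᵀ * U = 1) : IsStarProjection (U * Uᵀ) := by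
  rw [isStarProjection_iff', star_eq_conjTranspose, conjTranspose_eq_transpose_of_trivial,
    transpose_mul, transpose_transpose, Matrix.mul_assoc, ← Matrix.mul_assoc Uᵀ, hU,
    Matrix.one_mul]
  exact ⟨rfl, rfl⟩

theorem diag_transpose_mul_self_nonneg {ι κ : Type*} [Fintype ι] (A : Matrix ι κ ℝ) (j : κ) :
    0 ≤ (Aᵀ * A) j j := by
  simpa [mul_apply] using Finset.sum_nonneg fun i _ => mul_self_nonneg (A i j)

theorem transpose_mul_mul_eq_of_isStarProjection {ι κ : Type*} [Fintype ι] {P : Matrix ι ι ℝ}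
    (hP : IsStarProjection P) (U : Matrix ι κ ℝ) : Uᵀ * P * U = (P * U)ᵀ * (P * U) := by
  rw [transpose_mul, transpose_eq_self_of_isStarProjection hP, Matrix.mul_assoc Uᵀ P (P * U),
    ← Matrix.mul_assoc P P, hP.isIdempotentElem.eq, Matrix.mul_assoc]

theorem trace_mul_nonneg_of_isStarProjection {ι : Type*} [Fintype ι] {P R : Matrix ι ι ℝ}
    (hP : IsStarProjection P) (hR : IsStarProjection R) : 0 ≤ (P * R).trace := by
  have h : 0 ≤ ((P * R)ᵀ * (P * R)).trace :=
    Finset.sum_nonneg fun j _ => diag_transpose_mul_self_nonneg (P * R) j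
  rwa [← transpose_mul_mul_eq_of_isStarProjection hP, transpose_eq_self_of_isStarProjection hR,
    trace_mul_cycle, hR.isIdempotentElem.eq, trace_mul_comm] at h

theorem diag_transpose_mul_mul_mem_Icc {ι κ : Type*} [Fintype ι] [DecidableEq ι]
    [DecidableEq κ] {P : Matrix ι ι ℝ} (hP : IsStarProjection P) {U : Matrix ι κ ℝ}
    (hU : Uᵀ * U = 1) (j : κ) : (Uᵀ * P * U) j j ∈ Set.Icc 0 1 := by
  have hcompl : 1 - Uᵀ * P * U = Uᵀ * (1 - P) * U := by
    rw [Matrix.mul_sub, Matrix.sub_mul, Matrix.mul_one, hU]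
  have h1 := diag_transpose_mul_self_nonneg ((1 - P) * U) j
  rw [← transpose_mul_mul_eq_of_isStarProjection hP.one_sub, ← hcompl] at h1
  rw [transpose_mul_mul_eq_of_isStarProjection hP]
  refine ⟨diag_transpose_mul_self_nonneg _ j, ?_⟩
  simpa [transpose_mul_mul_eq_of_isStarProjection hP] using h1

theorem trace_transpose_mul_mul_le_trace {ι κ : Type*} [Fintype ι] [DecidableEq ι] [Fintype κ]
    [DecidableEq κ] {P : Matrix ι ι ℝ} (hP : IsStarProjection P) {U : Matrix ι κ ℝ}
    (hU : Uᵀ * U = 1) : (Uᵀ * P * U).trace ≤ P.trace := by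
  have h := trace_mul_nonneg_of_isStarProjection hP (isStarProjection_mul_transpose hU).one_sub
  rw [Matrix.mul_sub, Matrix.mul_one, trace_sub, ← Matrix.mul_assoc, trace_mul_comm] at h
  rw [Matrix.mul_assoc]
  linarith

theorem rank_mul_diagonal_mul_transpose {ι κ μ K : Type*} [Field K] [DecidableEq K] [Fintype ι]
    [Fintype κ] [Fintype μ] [DecidableEq μ] {U : Matrix ι μ K} {V : Matrix κ μ K}
    (hU : Uᵀ * U = 1) (hV : Vᵀ * V = 1) (d : μ → K) :
    (U * diagonal d * Vᵀ).rank = Fintype.card {i // d i ≠ 0} := by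
  rw [← rank_diagonal]
  apply le_antisymm
  · exact (rank_mul_le_left _ _).trans (rank_mul_le_right _ _)
  · have h : diagonal d = Uᵀ * (U * diagonal d * Vᵀ) * V := by
      rw [Matrix.mul_assoc, Matrix.mul_assoc, Matrix.mul_assoc, hV, Matrix.mul_one,
        ← Matrix.mul_assoc, hU, Matrix.one_mul]
    nth_rewrite 1 [h]
    exact (rank_mul_le_left _ _).trans (rank_mul_le_right _ _)

theorem trace_transpose_mul_diagonal_mul_transpose {ι κ μ K : Type*} [CommRing K] [Fintype ι]
    [Fintype κ] [Fintype μ] [DecidableEq μ] {U : Matrix ι μ K} {V : Matrix κ μ K}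
    (hU : Uᵀ * U = 1) (hV : Vᵀ * V = 1) (d e : μ → K) :
    ((U * diagonal d * Vᵀ)ᵀ * (U * diagonal e * Vᵀ)).trace = ∑ i, d i * e i := by
  have h : (U * diagonal d * Vᵀ)ᵀ * (U * diagonal e * Vᵀ)
      = V * (diagonal d * diagonal e) * Vᵀ := by
    simp only [transpose_mul, transpose_transpose, diagonal_transpose, Matrix.mul_assoc]
    rw [← Matrix.mul_assoc Uᵀ U, hU, Matrix.one_mul]
  rw [h, trace_mul_cycle, ← Matrix.mul_assoc, hV, Matrix.one_mul, diagonal_mul_diagonal,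
    trace_diagonal]

end Matrix

section

variable {n m k : ℕ}

theorem frobSq_eq_trace (A : Matrix (Fin n) (Fin m) ℝ) : frobSq A = (Aᵀ * A).trace := by
  simp only [frobSq, trace, diag, mul_apply, transpose_apply, sq]
  exact Finset.sum_comm

theorem frobSq_nonneg (A : Matrix (Fin n) (Fin m) ℝ) : 0 ≤ frobSq A := by
  unfold frobSq
  positivity

theorem frobSq_eq_zero_iff {A : Matrix (Fin n) (Fin m) ℝ} : frobSq A = 0 ↔ A = 0 := by
  simp [frobSq, Finset.sum_eq_zero_iff_of_nonneg, Finset.sum_nonneg, sq_nonneg, ← Matrix.ext_iff]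

theorem frobSq_sub (A B : Matrix (Fin n) (Fin m) ℝ) :
    frobSq (A - B) = frobSq A - 2 * (Aᵀ * B).trace + frobSq B := by
  rw [frobSq_eq_trace, frobSq_eq_trace, frobSq_eq_trace, transpose_sub, Matrix.sub_mul,
    Matrix.mul_sub, Matrix.mul_sub, trace_sub, trace_sub, trace_sub, ← trace_transpose (Bᵀ * A),
    transpose_mul, transpose_transpose]
  ring

theorem frobSq_smul (a : ℝ) (A : Matrix (Fin n) (Fin m) ℝ) :
    frobSq (a • A) = a ^ 2 * frobSq A := by
  simp only [frobSq, Matrix.smul_apply, smul_eq_mul, mul_pow, Finset.mul_sum]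

theorem frobSq_mul_diagonal_mul_transpose {U : Matrix (Fin n) (Fin k) ℝ}
    {V : Matrix (Fin m) (Fin k) ℝ} (hU : Uᵀ * U = 1) (hV : Vᵀ * V = 1) (d : Fin k → ℝ) :
    frobSq (U * diagonal d * Vᵀ) = ∑ i, d i ^ 2 := by
  simp only [frobSq_eq_trace, trace_transpose_mul_diagonal_mul_transpose hU hV, sq]

theorem frobSq_mul_mul_diagonal_mul_transpose {P : Matrix (Fin n) (Fin n) ℝ}
    (hP : IsStarProjection P) {U : Matrix (Fin n) (Fin k) ℝ} {V : Matrix (Fin m) (Fin k) ℝ}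
    (hV : Vᵀ * V = 1) (σ : Fin k → ℝ) :
    frobSq (P * (U * diagonal σ * Vᵀ)) = ∑ i, σ i ^ 2 * (Uᵀ * P * U) i i := by
  have h : (U * diagonal σ * Vᵀ)ᵀ * P * (U * diagonal σ * Vᵀ)
      = V * (diagonal σ * (Uᵀ * P * U) * diagonal σ) * Vᵀ := by
    simp only [transpose_mul, transpose_transpose, diagonal_transpose, Matrix.mul_assoc]
  rw [frobSq_eq_trace, ← transpose_mul_mul_eq_of_isStarProjection hP, h, trace_mul_cycle,
    ← Matrix.mul_assoc, hV, Matrix.one_mul]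
  simp only [trace, diag, mul_diagonal, diagonal_mul, sq]
  exact Finset.sum_congr rfl fun i _ => by ring

theorem frobSq_sub_add_frobSq_eq {P : Matrix (Fin n) (Fin n) ℝ} (hP : IsStarProjection P)
    {Y B : Matrix (Fin n) (Fin m) ℝ} (hPB : P * B = B) {η : ℝ} (hη : 1 + η ≠ 0) :
    frobSq (Y - B) / 2 + η / 2 * frobSq B
      = frobSq Y / 2 - frobSq (P * Y) / (2 * (1 + η))
        + (1 + η) / 2 * frobSq (B - (1 + η)⁻¹ • (P * Y)) := by
  have hYB : (Bᵀ * (P * Y)).trace = (Yᵀ * B).trace := by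
    rw [← Matrix.mul_assoc, ← transpose_eq_self_of_isStarProjection hP, ← transpose_mul, hPB,
      ← trace_transpose, transpose_mul, transpose_transpose]
  rw [frobSq_sub, frobSq_sub, Matrix.mul_smul, trace_smul, hYB, frobSq_smul, smul_eq_mul]
  field_simp
  ring

theorem mul_eq_mul_diagonal_of_diag_eq {P : Matrix (Fin n) (Fin n) ℝ} (hP : IsStarProjection P)
    {U : Matrix (Fin n) (Fin k) ℝ} (hU : Uᵀ * U = 1) {d : Fin k → ℝ} (hd : ∀ i, d i ^ 2 = d i)
    (hdiag : ∀ i, (Uᵀ * P * U) i i = d i) : P * U = U * diagonal d := by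
  have hPU : (P * U)ᵀ * (U * diagonal d) = Uᵀ * P * U * diagonal d := by
    rw [transpose_mul, transpose_eq_self_of_isStarProjection hP, ← Matrix.mul_assoc,
      Matrix.mul_assoc (Uᵀ * P)]
  have hUd : (U * diagonal d)ᵀ * (U * diagonal d) = diagonal d * diagonal d := by
    rw [transpose_mul, diagonal_transpose, Matrix.mul_assoc, ← Matrix.mul_assoc Uᵀ, hU,
      Matrix.one_mul]
  rw [← sub_eq_zero, ← frobSq_eq_zero_iff, frobSq_sub, frobSq_eq_trace (P * U),
    frobSq_eq_trace (U * diagonal d), ← transpose_mul_mul_eq_of_isStarProjection hP, hPU, hUd,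
    diagonal_mul_diagonal, trace_diagonal]
  simp only [trace, diag, mul_diagonal, hdiag, ← sq, hd]
  ring

theorem thetaHR_eq_ite {lam η t : ℝ} (ht : 0 ≤ t) (hne : t ≠ lam) :
    thetaHR lam η t = if lam < t then t / (1 + η) else 0 := by
  rw [thetaHR, abs_of_nonneg ht]
  split_ifs with h₁ h₂ h₂
  · exact absurd (h₁.trans h₂) (lt_irrefl t)
  · rfl
  · rfl
  · exact absurd (le_antisymm (not_lt.mp h₂) (not_lt.mp h₁)) hne

theorem sq_sub_sq_mul_ite_le {lam t q : ℝ} (hlam : 0 ≤ lam) (ht : 0 ≤ t) (hq : q ∈ Set.Icc 0 1) :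
    (lam ^ 2 - t ^ 2) * (if lam < t then 1 else 0) ≤ (lam ^ 2 - t ^ 2) * q := by
  obtain ⟨hq0, hq1⟩ := hq
  split_ifs with h
  · have := pow_le_pow_left₀ hlam h.le 2
    nlinarith [mul_nonneg (sub_nonneg.2 this) (sub_nonneg.2 hq1)]
  · have := pow_le_pow_left₀ ht (not_lt.1 h) 2
    nlinarith [mul_nonneg (sub_nonneg.2 this) hq0]

theorem eq_ite_of_sq_sub_sq_mul_eq {lam t q : ℝ} (hlam : 0 ≤ lam) (ht : 0 ≤ t) (hne : t ≠ lam)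
    (h : (lam ^ 2 - t ^ 2) * q = (lam ^ 2 - t ^ 2) * (if lam < t then 1 else 0)) :
    q = if lam < t then 1 else 0 := by
  refine mul_left_cancel₀ (fun h0 => hne ?_) h
  nlinarith [sq_nonneg (t - lam), sq_nonneg (t + lam)]

noncomputable def rankFrobeniusObjective (lam η : ℝ) (Y B : Matrix (Fin n) (Fin m) ℝ) :
    ℝ :=
  frobSq (Y - B) / 2 + η / 2 * frobSq B + lam ^ 2 / (2 * (1 + η)) * (B.rank : ℝ)

theorem rankFrobeniusObjective_eq_of_isStarProjection {lam η : ℝ} (hη : 1 + η ≠ 0)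
    {P : Matrix (Fin n) (Fin n) ℝ} (hP : IsStarProjection P) {B : Matrix (Fin n) (Fin m) ℝ}
    (hPB : P * B = B) (hrank : P.rank = B.rank) {U : Matrix (Fin n) (Fin k) ℝ}
    {V : Matrix (Fin m) (Fin k) ℝ} (hV : Vᵀ * V = 1) (σ : Fin k → ℝ) :
    rankFrobeniusObjective lam η (U * diagonal σ * Vᵀ) B
      = frobSq (U * diagonal σ * Vᵀ) / 2
        + (1 + η) / 2 * frobSq (B - (1 + η)⁻¹ • (P * (U * diagonal σ * Vᵀ)))
        + lam ^ 2 / (2 * (1 + η)) * (P.trace - (Uᵀ * P * U).trace)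
        + (∑ i, (lam ^ 2 - σ i ^ 2) * (Uᵀ * P * U) i i) / (2 * (1 + η)) := by
  have hsum : ∑ i, (lam ^ 2 - σ i ^ 2) * (Uᵀ * P * U) i i
      = lam ^ 2 * (Uᵀ * P * U).trace - ∑ i, σ i ^ 2 * (Uᵀ * P * U) i i := by
    rw [trace, Finset.mul_sum, ← Finset.sum_sub_distrib]
    exact Finset.sum_congr rfl fun i _ => by simp only [diag]; ring
  rw [rankFrobeniusObjective, frobSq_sub_add_frobSq_eq hP hPB hη,
    frobSq_mul_mul_diagonal_mul_transpose hP hV, ← hrank,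
    ← trace_eq_rank_of_isIdempotentElem hP.isIdempotentElem, hsum]
  field_simp
  ring

theorem rankFrobeniusObjective_thresholded {lam η : ℝ} (hlam : 0 < lam) (hη : 0 ≤ η)
    {U : Matrix (Fin n) (Fin k) ℝ} {V : Matrix (Fin m) (Fin k) ℝ} (hU : Uᵀ * U = 1)
    (hV : Vᵀ * V = 1) {σ : Fin k → ℝ} (hσ : ∀ i, 0 ≤ σ i) (hne : ∀ i, σ i ≠ lam) :
    rankFrobeniusObjective lam η (U * diagonal σ * Vᵀ)
        (U * diagonal (fun i => thetaHR lam η (σ i)) * Vᵀ)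
      = frobSq (U * diagonal σ * Vᵀ) / 2
        + (∑ i, (lam ^ 2 - σ i ^ 2) * (if lam < σ i then 1 else 0)) / (2 * (1 + η)) := by
  have hθ i := thetaHR_eq_ite (η := η) (hσ i) (hne i)
  have hsupp i : thetaHR lam η (σ i) ≠ 0 ↔ lam < σ i := by
    rw [hθ i]
    split_ifs with h
    · exact iff_of_true (div_pos (hlam.trans h) (by linarith)).ne' h
    · simpa using h
  rw [rankFrobeniusObjective, ← Matrix.sub_mul, ← Matrix.mul_sub, diagonal_sub,
    frobSq_mul_diagonal_mul_transpose hU hV, frobSq_mul_diagonal_mul_transpose hU hV,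
    frobSq_mul_diagonal_mul_transpose hU hV, rank_mul_diagonal_mul_transpose hU hV,
    Fintype.card_subtype, Finset.natCast_card_filter]
  simp only [hsupp, Finset.sum_div, Finset.mul_sum, ← Finset.sum_add_distrib]
  refine Finset.sum_congr rfl fun i _ => ?_
  rw [hθ i]
  split_ifs
  · field_simp
    ring
  · ring

theorem smul_mul_diagonal_eq_thresholded {lam η : ℝ} {U : Matrix (Fin n) (Fin k) ℝ}
    {V : Matrix (Fin m) (Fin k) ℝ} {σ : Fin k → ℝ} (hσ : ∀ i, 0 ≤ σ i) (hne : ∀ i, σ i ≠ lam)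
    {P : Matrix (Fin n) (Fin n) ℝ}
    (hPU : P * U = U * diagonal fun i => if lam < σ i then (1 : ℝ) else 0) :
    (1 + η)⁻¹ • (P * (U * diagonal σ * Vᵀ))
      = U * diagonal (fun i => thetaHR lam η (σ i)) * Vᵀ := by
  rw [← Matrix.mul_assoc P, ← Matrix.mul_assoc P, hPU, Matrix.mul_assoc U (diagonal _),
    diagonal_mul_diagonal, ← Matrix.smul_mul, ← Matrix.mul_smul, ← diagonal_smul]
  congr 3
  funext i
  rw [thetaHR_eq_ite (hσ i) (hne i)]
  split_ifs with h <;> simp [h, div_eq_inv_mul]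

end

/-- Singular-value hard-ridge thresholding solves the rank-Frobenius penalized problem: with
`λ > 0`, `η ≥ 0`, and no singular value of `Y` equal to `λ`,
`B̂ = U diag(Θ_HR(σ_i(Y);λ,η)) Vᵀ` is the unique global minimizer of
`‖Y−B‖_F²/2 + (η/2)‖B‖_F² + (λ²/(2(1+η)))·rank(B)`. -/
theorem hard_ridge_thresholding_rank_frobenius {n m : ℕ}
    (lam η : ℝ) (hlam : 0 < lam) (hη : 0 ≤ η)
    (Y : Matrix (Fin n) (Fin m) ℝ)
    (U : Matrix (Fin n) (Fin (min n m)) ℝ) (σ : Fin (min n m) → ℝ)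
    (V : Matrix (Fin m) (Fin (min n m)) ℝ)
    (hY : IsSVD Y U σ V)
    (hnotie : ∀ i, σ i ≠ lam) :
    ∀ B : Matrix (Fin n) (Fin m) ℝ,
      B ≠ U * diagonal (fun i => thetaHR lam η (σ i)) * Vᵀ →
      frobSq (Y - U * diagonal (fun i => thetaHR lam η (σ i)) * Vᵀ) / 2
          + η / 2 * frobSq (U * diagonal (fun i => thetaHR lam η (σ i)) * Vᵀ)
          + lam ^ 2 / (2 * (1 + η))
            * ((U * diagonal (fun i => thetaHR lam η (σ i)) * Vᵀ).rank : ℝ)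
        < frobSq (Y - B) / 2 + η / 2 * frobSq B + lam ^ 2 / (2 * (1 + η)) * (B.rank : ℝ) := by
  obtain ⟨hU, hV, -, hσ, rfl⟩ := hY
  intro B hB
  obtain ⟨P, hP, hPB, hrank⟩ := exists_isStarProjection_mul_eq_self B
  change rankFrobeniusObjective lam η _ _ < rankFrobeniusObjective lam η _ _
  rw [rankFrobeniusObjective_thresholded hlam hη hU hV hσ hnotie,
    rankFrobeniusObjective_eq_of_isStarProjection (by linarith) hP hPB hrank hV]
  set ind : Fin (min n m) → ℝ := fun i => if lam < σ i then 1 else 0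
  set D := B - (1 + η)⁻¹ • (P * (U * diagonal σ * Vᵀ))
  have hle i : (lam ^ 2 - σ i ^ 2) * ind i ≤ (lam ^ 2 - σ i ^ 2) * (Uᵀ * P * U) i i :=
    sq_sub_sq_mul_ite_le hlam.le (hσ i) (diag_transpose_mul_mul_mem_Icc hP hU i)
  have hsum := Finset.sum_le_sum fun i (_ : i ∈ Finset.univ) => hle i
  have h1η : 0 < 2 * (1 + η) := by linarith
  have hrk := mul_nonneg (div_nonneg (sq_nonneg lam) h1η.le)
    (sub_nonneg.2 (trace_transpose_mul_mul_le_trace hP hU))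
  have hS := div_le_div_of_nonneg_right hsum h1η.le
  have hF := frobSq_nonneg D
  by_contra! hJ
  have hslack : frobSq D = 0 := by nlinarith
  have hdiag i : (Uᵀ * P * U) i i = ind i := by
    have heq := le_antisymm hsum ((div_le_div_iff_of_pos_right h1η).mp (by nlinarith))
    refine eq_ite_of_sq_sub_sq_mul_eq hlam.le (hσ i) (hnotie i) ?_
    exact ((Finset.sum_eq_sum_iff_of_le fun i _ => hle i).mp heq i (Finset.mem_univ i)).symm
  have hPU := mul_eq_mul_diagonal_of_diag_eq hP hU (fun i => by simp [ind]) hdiag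
  exact hB ((sub_eq_zero.mp (frobSq_eq_zero_iff.mp hslack)).trans
    (smul_mul_diagonal_eq_thresholded hσ hnotie hPU))
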